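/- (Kernel identity underlying the estimator identities.) For every Pauli string P_a on n qubits, the uniform average over the 6^n n-fold product Pauli eigenstates ρ satisfies the matrix identity 6^{-n} ∑_ρ tr(P_a * ρ) • ρ = 2^{-n} · (1/3)^{|a|} • P_a, where |a| is the number of indices j with a j ≠ 0. -/

import Mathlib

open Matrix Finset

noncomputable section

/-- The four single-qubit Pauli matrices: σ₀ = I, σ₁ = X, σ₂ = Y, σ₃ = Z. -/
def pauli : Fin 4 → Matrix (Fin 2) (Fin 2) ℂ
  | 0 => 1
  | 1 => !![0, 1; 1, 0]
  | 2 => !![0, -Complex.I; Complex.I, 0]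
  | 3 => !![1, 0; 0, -1]

/-- The `n`-qubit Pauli string `P_a = σ_{a 1} ⊗ ⋯ ⊗ σ_{a n}` (n-fold Kronecker product),
a `2^n × 2^n` complex matrix indexed by `Fin n → Fin 2`. -/
def PauliString {n : ℕ} (a : Fin n → Fin 4) :
    Matrix (Fin n → Fin 2) (Fin n → Fin 2) ℂ :=
  fun i k => ∏ j, pauli (a j) (i j) (k j)

/-- `⟨a,b⟩ ∈ {0,1}`: parity of the number of positions where `a` and `b` anticommute. -/
def ppair {n : ℕ} (a b : Fin n → Fin 4) : ℕ :=
  (Finset.univ.filter fun j => a j ≠ 0 ∧ b j ≠ 0 ∧ a j ≠ b j).card % 2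

/-- The weight `|a|` of a Pauli string: the number of non-identity tensor factors. -/
def pweight {n : ℕ} (a : Fin n → Fin 4) : ℕ :=
  (Finset.univ.filter fun j => a j ≠ 0).card

/-- The six single-qubit Pauli eigenstates `(I₂ + s•W)/2`, `s ∈ {1,-1}`, `W ∈ {X,Y,Z}`,
indexed by `Bool × Fin 3`. -/
def eigState : Bool × Fin 3 → Matrix (Fin 2) (Fin 2) ℂ :=
  fun q => (2⁻¹ : ℂ) • (1 + (if q.1 then (1 : ℂ) else -1) • pauli q.2.succ)

/-- The `6^n` n-fold product Pauli eigenstates `ρ₁ ⊗ ⋯ ⊗ ρ_n` with each `ρ_j ∈ S₁`. -/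
def prodEigState {n : ℕ} (f : Fin n → Bool × Fin 3) :
    Matrix (Fin n → Fin 2) (Fin n → Fin 2) ℂ :=
  fun i k => ∏ j, eigState (f j) (i j) (k j)

/-!
Both `P_a` and every product eigenstate are Kronecker products, so `tr (P_a ρ)` factorizes and
the sum over the `6^n` product states splits into an `n`-fold Kronecker product of single-qubit
sums. On one qubit, `tr (σ_b (I + s σ_W) / 2) = δ_{b,0} + s δ_{b,W}`; summing over `s = ±1` and
`W ∈ {X, Y, Z}` gives `∑_ρ tr (σ_b ρ) ρ = 3 I` for `b = 0` and `σ_b` otherwise. Hence the sum is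
`3^n (1/3)^|a| P_a`, and `6^n = 2^n 3^n`.
-/

namespace Matrix

variable {ι m R : Type*} [Fintype ι] [CommSemiring R]

def piKronecker (A : ι → Matrix m m R) : Matrix (ι → m) (ι → m) R :=
  of fun i k => ∏ j, A j (i j) (k j)

lemma piKronecker_mul_piKronecker [DecidableEq ι] [Fintype m] (A B : ι → Matrix m m R) :
    piKronecker A * piKronecker B = piKronecker (A * B) := by
  ext i k
  simp only [piKronecker, mul_apply, of_apply, Pi.mul_apply, Fintype.prod_sum,
    Finset.prod_mul_distrib]

lemma trace_piKronecker [DecidableEq ι] [Fintype m] (A : ι → Matrix m m R) :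
    (piKronecker A).trace = ∏ j, (A j).trace := by
  simp only [trace, diag, piKronecker, of_apply, Fintype.prod_sum]

lemma piKronecker_smul (c : ι → R) (A : ι → Matrix m m R) :
    piKronecker (fun j => c j • A j) = (∏ j, c j) • piKronecker A := by
  ext i k
  simp only [piKronecker, of_apply, smul_apply, smul_eq_mul, Finset.prod_mul_distrib]

lemma sum_smul_piKronecker [DecidableEq ι] {κ : Type*} [Fintype κ] (c : ι → κ → R)
    (A : ι → κ → Matrix m m R) :
    ∑ f : ι → κ, (∏ j, c j (f j)) • piKronecker (fun j => A j (f j))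
      = piKronecker (fun j => ∑ q, c j q • A j q) := by
  ext i k
  simp only [piKronecker, of_apply, sum_apply, smul_apply, smul_eq_mul, Fintype.prod_sum,
    Finset.prod_mul_distrib]

end Matrix

lemma pauli_zero : pauli 0 = 1 := rfl

lemma trace_pauli_mul_pauli (b c : Fin 4) :
    (pauli b * pauli c).trace = if b = c then 2 else 0 := by
  fin_cases b <;> fin_cases c <;> simp [pauli, trace_fin_two] <;> norm_num

lemma trace_pauli_mul_eigState (b : Fin 4) (q : Bool × Fin 3) :
    (pauli b * eigState q).trace
      = (if b = 0 then 1 else 0) + (if q.1 then 1 else -1) * (if b = q.2.succ then 1 else 0) := by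
  have htrace : (pauli b).trace = (pauli b * pauli 0).trace := by rw [pauli_zero, mul_one]
  simp only [eigState, mul_smul_comm, mul_add, mul_one, trace_smul, trace_add, htrace,
    trace_pauli_mul_pauli, smul_eq_mul]
  split_ifs <;> norm_num

lemma sum_trace_pauli_mul_eigState_smul (b : Fin 4) :
    ∑ q, (pauli b * eigState q).trace • eigState q = (if b = 0 then (3 : ℂ) else 1) • pauli b := by
  simp only [trace_pauli_mul_eigState, Fintype.sum_prod_type, Fintype.sum_bool,
    Fin.sum_univ_three]
  fin_cases b <;> simp [eigState, pauli_zero] <;> module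

lemma PauliString_eq_piKronecker {n : ℕ} (a : Fin n → Fin 4) :
    PauliString a = piKronecker fun j => pauli (a j) := rfl

lemma prodEigState_eq_piKronecker {n : ℕ} (f : Fin n → Bool × Fin 3) :
    prodEigState f = piKronecker fun j => eigState (f j) := rfl

lemma prod_ite_eq_zero_three_one {n : ℕ} (a : Fin n → Fin 4) :
    ∏ j, (if a j = 0 then (3 : ℂ) else 1) = 3 ^ n * (1 / 3) ^ pweight a := by
  have hfactor : ∀ j, (if a j = 0 then (3 : ℂ) else 1) = 3 * if a j ≠ 0 then 1 / 3 else 1 := by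
    intro j
    by_cases h : a j = 0 <;> simp [h]
  simp only [hfactor, Finset.prod_mul_distrib, Finset.prod_const, Finset.card_univ,
    Fintype.card_fin, Finset.prod_ite, one_pow, mul_one, pweight]

/-- Kernel identity underlying the estimator identities: the `tr(P_a ρ)`-weighted average
of the product Pauli eigenstates is `2^{-n} (1/3)^{|a|} P_a`. -/
theorem eigenstate_kernel_identity {n : ℕ} (a : Fin n → Fin 4) :
    ((6 : ℂ) ^ n)⁻¹ • ∑ f : Fin n → Bool × Fin 3,
        (PauliString a * prodEigState f).trace • prodEigState f
      = (((2 : ℂ) ^ n)⁻¹ * (1 / 3 : ℂ) ^ pweight a) • PauliString a := by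
  have hscalar : ((6 : ℂ) ^ n)⁻¹ * (3 ^ n * (1 / 3) ^ pweight a)
      = ((2 : ℂ) ^ n)⁻¹ * (1 / 3) ^ pweight a := by
    rw [show (6 : ℂ) = 2 * 3 by norm_num, mul_pow]
    field_simp
  calc ((6 : ℂ) ^ n)⁻¹ • ∑ f : Fin n → Bool × Fin 3,
        (PauliString a * prodEigState f).trace • prodEigState f
      = ((6 : ℂ) ^ n)⁻¹ • ∑ f : Fin n → Bool × Fin 3,
          (∏ j, (pauli (a j) * eigState (f j)).trace) • piKronecker fun j => eigState (f j) := by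
        simp only [PauliString_eq_piKronecker, prodEigState_eq_piKronecker,
          piKronecker_mul_piKronecker, trace_piKronecker, Pi.mul_apply]
    _ = ((6 : ℂ) ^ n)⁻¹ • piKronecker fun j =>
          ∑ q, (pauli (a j) * eigState q).trace • eigState q := by
        rw [sum_smul_piKronecker (fun j q => (pauli (a j) * eigState q).trace) fun _ => eigState]
    _ = ((6 : ℂ) ^ n)⁻¹ • piKronecker fun j => (if a j = 0 then (3 : ℂ) else 1) • pauli (a j) := by
        simp only [sum_trace_pauli_mul_eigState_smul]
    _ = (((2 : ℂ) ^ n)⁻¹ * (1 / 3 : ℂ) ^ pweight a) • PauliString a := by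
        rw [piKronecker_smul, prod_ite_eq_zero_three_one, smul_smul, hscalar,
          PauliString_eq_piKronecker]
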